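/- Let p, s, t be real numbers, and define the sequence G_n(p,u) for real u by G_0(p,u) = 1 and G_n(p,u) = (p/n) Σ_{k=1}^{n} (−1)^{k+1} B_k(u) G_{n−k}(p,u) for n ≥ 1. Then for every n ≥ 0, G_n(p, s+t) = Σ_{k=0}^{n} C(p−n+k, k) · G_{n−k}(p, s) · t^k, where C(x,k) denotes the generalized binomial coefficient. -/

import Mathlib

open Finset

/-- The `k`-th Bernoulli polynomial evaluated at a real number `t`
(generating function `u e^{tu}/(e^u - 1)`, so `B 1 t = t - 1/2`). -/
noncomputable def bern (k : ℕ) (t : ℝ) : ℝ :=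
  Polynomial.aeval t (Polynomial.bernoulli k)

/-- The generalized binomial coefficient `C(x, k) = x(x-1)⋯(x-k+1)/k!`. -/
noncomputable def genBinom (x : ℝ) (k : ℕ) : ℝ :=
  (∏ i ∈ Finset.range k, (x - (i : ℝ))) / (Nat.factorial k : ℝ)

/-! Write `Γ_u(z) = ∑ₖ (-1)^(k+1) B_k(u) zᵏ` (so `Γ_u(0) = -1`) and `A_u(z) = ∑ₙ G_n(p, u) zⁿ`.
The recurrence says `z A_u' = p (1 + Γ_u) A_u`, which together with `A_u(0) = 1` determines `A_u`.
The Appell property `B_k(s + t) = ∑ C(k, i) B_i(s) t^(k-i)` gives `Γ_{s+t}(z) = Γ_s(w) / (1 + t z)`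
with `w = z / (1 + t z)`, and `H(z) = (1 + t z)^p A_s(w)` then solves the equation for `Γ_{s+t}`,
so `A_{s+t} = H`; the coefficients of `H` are the right-hand side. Coefficientwise, this
computation is Chu–Vandermonde for `(1 + t z)^(-i-1) (1 + t z)^(p-m)` together with
`(q - k) C(q, k) = q C(q - 1, k)`. -/

theorem Finset.Nat.sum_antidiagonal_sum_antidiagonal_comm {M : Type*} [AddCommMonoid M] (n : ℕ)
    (f : ℕ → ℕ → ℕ → ℕ → M) :
    ∑ x ∈ antidiagonal n, ∑ y ∈ antidiagonal x.1, ∑ z ∈ antidiagonal x.2, f y.1 y.2 z.1 z.2 =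
      ∑ x ∈ antidiagonal n, ∑ y ∈ antidiagonal x.1, ∑ z ∈ antidiagonal x.2, f y.1 z.1 y.2 z.2 := by
  simp only [← sum_product']
  rw [sum_sigma', sum_sigma']
  let regroup (a : Σ _ : ℕ × ℕ, (ℕ × ℕ) × ℕ × ℕ) : Σ _ : ℕ × ℕ, (ℕ × ℕ) × ℕ × ℕ :=
    ⟨(a.2.1.1 + a.2.2.1, a.2.1.2 + a.2.2.2), ((a.2.1.1, a.2.2.1), (a.2.1.2, a.2.2.2))⟩
  refine sum_nbij' regroup regroup ?_ ?_ ?_ ?_ ?_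
  all_goals
    rintro ⟨⟨j, k⟩, ⟨i, d⟩, ⟨m, r⟩⟩ h
    simp only [mem_sigma, mem_product, HasAntidiagonal.mem_antidiagonal] at h
  · simp only [regroup, mem_sigma, mem_product, HasAntidiagonal.mem_antidiagonal, and_true]; omega
  · simp only [regroup, mem_sigma, mem_product, HasAntidiagonal.mem_antidiagonal, and_true]; omega
  · obtain ⟨rfl, rfl, rfl⟩ := h; rfl
  · obtain ⟨rfl, rfl, rfl⟩ := h; rfl
  · rfl

theorem sum_Icc_mul_sub_eq_sum_antidiagonal {R : Type*} [Semiring R] (γ a : ℕ → R) (n : ℕ) :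
    ∑ k ∈ Icc 1 (n + 1), γ k * a (n + 1 - k) = ∑ x ∈ antidiagonal n, γ (x.1 + 1) * a x.2 := by
  calc ∑ k ∈ Icc 1 (n + 1), γ k * a (n + 1 - k)
      = ∑ k ∈ Ico 0 (n + 1), γ (k + 1) * a (n + 1 - (k + 1)) := by
        rw [sum_Ico_add' (fun k => γ k * a (n + 1 - k)), zero_add, Ico_add_one_right_eq_Icc]
    _ = ∑ x ∈ antidiagonal n, γ (x.1 + 1) * a x.2 := by
        simp only [Nat.sum_antidiagonal_eq_sum_range_succ (fun i j => γ (i + 1) * a j),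
          range_eq_Ico, Nat.add_sub_add_right]

theorem genBinom_eq_choose (x : ℝ) (k : ℕ) : genBinom x k = Ring.choose x k := by
  rw [Ring.choose_eq_smul, smul_eq_mul, genBinom, div_eq_inv_mul, ← Polynomial.aeval_eq_smeval,
    Polynomial.aeval_def, ← Polynomial.eval_map, descPochhammer_map,
    descPochhammer_eval_eq_prod_range]

theorem sub_mul_genBinom (q : ℝ) (k : ℕ) : (q - k) * genBinom q k = q * genBinom (q - 1) k := by
  have hlast : ∏ i ∈ range (k + 1), (q - i) = (q - k) * ∏ i ∈ range k, (q - i) := by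
    rw [prod_range_succ, mul_comm]
  have hfirst : ∏ i ∈ range (k + 1), (q - i) = q * ∏ i ∈ range k, (q - 1 - i) := by
    rw [prod_range_succ', mul_comm]
    push_cast
    simp only [sub_zero, sub_add_eq_sub_sub_swap, sub_right_comm q]
  simp only [genBinom, mul_div_assoc', ← hlast, hfirst]

theorem sum_antidiagonal_neg_one_pow_mul_choose_mul_genBinom (i e : ℕ) (q : ℝ) :
    ∑ x ∈ antidiagonal e, (-1 : ℝ) ^ x.1 * ((i + x.1).choose i) * genBinom q x.2 =
      genBinom (q - i - 1) e := by
  have hneg (d : ℕ) : Ring.choose (-(i + 1 : ℝ)) d = (-1) ^ d * ((i + d).choose i) := by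
    rw [Ring.choose_neg, show (i + 1 : ℝ) + d - 1 = ((i + d : ℕ) : ℝ) by push_cast; ring,
      Ring.choose_natCast, Nat.choose_symm_add, Units.smul_def, zsmul_eq_mul,
      Int.cast_negOnePow_natCast]
  simp only [genBinom_eq_choose, show q - i - 1 = -(i + 1 : ℝ) + q by ring,
    Ring.add_choose_eq e (Commute.all (-(i + 1 : ℝ)) q), hneg]

/-- `p Γ A = z A' - p A` for the generating functions `Γ`, `A` of `γ`, `a`. -/
def ConvRecurrence (p : ℝ) (γ a : ℕ → ℝ) : Prop :=
  ∀ n : ℕ, p * ∑ x ∈ antidiagonal n, γ x.1 * a x.2 = (n - p) * a n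

/-- The coefficients of `Γ(z / (1 + t z)) / (1 + t z)`. -/
noncomputable def binomShift (t : ℝ) (γ : ℕ → ℝ) (j : ℕ) : ℝ :=
  ∑ x ∈ antidiagonal j, (j.choose x.1 : ℝ) * (-t) ^ x.2 * γ x.1

/-- The coefficients of `(1 + t z)^p A(z / (1 + t z))`. -/
noncomputable def genBinomShift (p t : ℝ) (a : ℕ → ℝ) (n : ℕ) : ℝ :=
  ∑ x ∈ antidiagonal n, a x.1 * genBinom (p - x.1) x.2 * t ^ x.2

namespace ConvRecurrence

variable {p : ℝ} {γ a b : ℕ → ℝ}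

theorem iff_succ (hγ : γ 0 = -1) : ConvRecurrence p γ a ↔
    ∀ n : ℕ, (n + 1) * a (n + 1) = p * ∑ x ∈ antidiagonal n, γ (x.1 + 1) * a x.2 := by
  refine ⟨fun h n => ?_, fun h n => ?_⟩
  · have hn := h (n + 1)
    rw [Nat.sum_antidiagonal_succ, hγ] at hn
    push_cast at hn
    linear_combination -hn
  · rcases n with _ | n
    · simp [hγ]
    · rw [Nat.sum_antidiagonal_succ, hγ]
      push_cast
      linear_combination -h n

theorem ext (ha : ConvRecurrence p γ a) (hb : ConvRecurrence p γ b) (hγ : γ 0 = -1)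
    (h0 : a 0 = b 0) : a = b := by
  funext n
  induction n using Nat.strong_induction_on with
  | _ n ih =>
    rcases n with _ | n
    · exact h0
    · have hsum : ∑ x ∈ antidiagonal n, γ (x.1 + 1) * a x.2 =
          ∑ x ∈ antidiagonal n, γ (x.1 + 1) * b x.2 := by
        refine sum_congr rfl fun x hx => ?_
        rw [ih x.2 (Nat.lt_succ_of_le (HasAntidiagonal.antidiagonal.snd_le hx))]
      have hn : ((n : ℝ) + 1) ≠ 0 := by positivity
      apply mul_left_cancel₀ hn
      rw [(iff_succ hγ).1 ha, (iff_succ hγ).1 hb, hsum]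

theorem translate (h : ConvRecurrence p γ a) (t : ℝ) :
    ConvRecurrence p (binomShift t γ) (genBinomShift p t a) := by
  intro n
  let f (i d m r : ℕ) : ℝ :=
    ((i + d).choose i * (-t) ^ d * γ i) * (a m * genBinom (p - m) r * t ^ r)
  have hexpand : ∑ x ∈ antidiagonal n, binomShift t γ x.1 * genBinomShift p t a x.2 =
      ∑ x ∈ antidiagonal n, ∑ y ∈ antidiagonal x.1, ∑ z ∈ antidiagonal x.2, f y.1 y.2 z.1 z.2 := by
    refine sum_congr rfl fun x _ => ?_
    rw [binomShift, genBinomShift, sum_mul_sum]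
    refine sum_congr rfl fun y hy => ?_
    rw [← HasAntidiagonal.mem_antidiagonal.1 hy]
  have hinner (i m e : ℕ) : ∑ z ∈ antidiagonal e, f i z.1 m z.2 =
      genBinom (p - (i + m : ℕ) - 1) e * t ^ e * (γ i * a m) := by
    rw [show p - ((i + m : ℕ) : ℝ) - 1 = p - m - i - 1 by push_cast; ring,
      ← sum_antidiagonal_neg_one_pow_mul_choose_mul_genBinom i e (p - m), sum_mul, sum_mul]
    refine sum_congr rfl fun z hz => ?_
    rw [← HasAntidiagonal.mem_antidiagonal.1 hz]
    simp only [f, neg_pow t, pow_add]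
    ring
  calc p * ∑ x ∈ antidiagonal n, binomShift t γ x.1 * genBinomShift p t a x.2
      = ∑ x ∈ antidiagonal n, genBinom (p - x.1 - 1) x.2 * t ^ x.2 *
          (p * ∑ y ∈ antidiagonal x.1, γ y.1 * a y.2) := by
        rw [hexpand, Finset.Nat.sum_antidiagonal_sum_antidiagonal_comm, mul_sum]
        refine sum_congr rfl fun x _ => ?_
        simp only [hinner, mul_sum]
        refine sum_congr rfl fun y hy => ?_
        rw [HasAntidiagonal.mem_antidiagonal.1 hy]
        ring
    _ = ∑ x ∈ antidiagonal n, (n - p) * (a x.1 * genBinom (p - x.1) x.2 * t ^ x.2) := by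
        refine sum_congr rfl fun x hx => ?_
        rw [h x.1, ← HasAntidiagonal.mem_antidiagonal.1 hx]
        have := sub_mul_genBinom (p - x.1) x.2
        push_cast
        linear_combination (a x.1 * t ^ x.2) * this
    _ = (n - p) * genBinomShift p t a n := by rw [genBinomShift, mul_sum]

end ConvRecurrence

theorem genBinomShift_eq_sum_range (p t : ℝ) (a : ℕ → ℝ) (n : ℕ) :
    genBinomShift p t a n =
      ∑ k ∈ range (n + 1), genBinom (p - n + k) k * a (n - k) * t ^ k := by
  rw [genBinomShift, ← Nat.sum_antidiagonal_swap, Nat.sum_antidiagonal_eq_sum_range_succ_mk]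
  refine sum_congr rfl fun k hk => ?_
  rw [Prod.swap, Nat.cast_sub (mem_range_succ_iff.1 hk), sub_sub_eq_add_sub, add_sub_right_comm]
  ring

open PowerSeries Nat in
theorem bern_add (j : ℕ) (s t : ℝ) :
    bern j (s + t) = ∑ x ∈ antidiagonal j, (j.choose x.1 : ℝ) * bern x.1 s * t ^ x.2 := by
  let E (u : ℝ) : ℝ⟦X⟧ := mk fun n => Polynomial.aeval u ((1 / n ! : ℚ) • Polynomial.bernoulli n)
  have hexp : exp ℝ - 1 ≠ 0 := fun h => by simpa using congr(coeff 1 $h)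
  have hE : E (s + t) = E s * rescale t (exp ℝ) := by
    refine mul_right_cancel₀ hexp ?_
    rw [Polynomial.bernoulli_generating_function, mul_right_comm,
      Polynomial.bernoulli_generating_function, mul_assoc, exp_mul_exp_eq_exp_add]
  have hj := congr(coeff j $hE)
  simp only [E, coeff_mk, coeff_mul, coeff_rescale, coeff_exp, map_smul, Rat.smul_def, eq_ratCast,
    Rat.cast_div, Rat.cast_one, Rat.cast_natCast] at hj
  rw [← mul_right_inj' (one_div_ne_zero (Nat.cast_ne_zero.2 j.factorial_ne_zero)), bern, hj,
    mul_sum]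
  refine sum_congr rfl fun x hx => ?_
  rw [HasAntidiagonal.mem_antidiagonal] at hx
  subst hx
  rw [Nat.cast_add_choose, bern]
  field_simp

noncomputable def altBern (u : ℝ) (k : ℕ) : ℝ := (-1) ^ (k + 1) * bern k u

theorem altBern_zero (u : ℝ) : altBern u 0 = -1 := by
  simp [altBern, bern]

theorem binomShift_altBern (s t : ℝ) : binomShift t (altBern s) = altBern (s + t) := by
  funext j
  rw [binomShift, altBern, bern_add, mul_sum]
  refine sum_congr rfl fun x hx => ?_
  rw [HasAntidiagonal.mem_antidiagonal] at hx
  subst hx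
  rw [altBern, neg_pow]
  ring

theorem G_translation_identity
    (p s t : ℝ) (G : ℝ → ℕ → ℝ) (hG0 : ∀ u : ℝ, G u 0 = 1)
    (hG : ∀ (u : ℝ) (n : ℕ), 1 ≤ n →
      G u n = (p / (n : ℝ)) *
        ∑ k ∈ Finset.Icc 1 n, (-1 : ℝ) ^ (k + 1) * bern k u * G u (n - k)) :
    ∀ n : ℕ,
      G (s + t) n =
        ∑ k ∈ Finset.range (n + 1),
          genBinom (p - (n : ℝ) + (k : ℝ)) k * G s (n - k) * t ^ k := by
  have hrec (u : ℝ) : ConvRecurrence p (altBern u) (G u) := by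
    refine (ConvRecurrence.iff_succ (altBern_zero u)).2 fun n => ?_
    rw [hG u (n + 1) n.succ_pos, ← sum_Icc_mul_sub_eq_sum_antidiagonal]
    simp only [altBern, Nat.cast_add_one]
    field_simp
  have hshift : G (s + t) = genBinomShift p t (G s) := by
    refine (hrec (s + t)).ext ?_ (altBern_zero _) (by simp [genBinomShift, genBinom, hG0])
    rw [← binomShift_altBern]
    exact (hrec s).translate t
  intro n
  rw [hshift, genBinomShift_eq_sum_range]
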